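/- Let 1 ≤ i ≤ s, write ξ_i = (k,t), and let p > k be such that the elements of M in column t are exactly {(j,t) : p ≤ j ≤ n}. There is no configuration a > b > c with k < a < p, (a,b) ∈ B_i (so (a,b) ∈ B_i^{(2)}, i.e. t < b < k), and (b,c) ∈ B_i^{(1.1)} (i.e. (b,c) ∈ B_i with 1 < b < k, t < c < k, and both (b,t) and (k,c) in B_{i−1}). -/

import Mathlib

open Finset MvPolynomial

namespace Panov

/-- The set `A` of places `(i,j)` with `n ≥ i > j ≥ 1`. -/
def placesA (n : ℕ) : Finset (ℕ × ℕ) :=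
  (Finset.range (n + 1) ×ˢ Finset.range (n + 1)).filter fun p => 1 ≤ p.2 ∧ p.2 < p.1

/-- The rank of a place in the linear order `≻`:
`η ≻ ζ` iff `ordA n η < ordA n ζ`. -/
def ordA (n : ℕ) (p : ℕ × ℕ) : ℕ := p.2 * (n + 1) + (n - p.1)

/-- The `≻`-greatest element of a (nonempty) set `B` of places:
the element with the minimal value of `ordA`. -/
def xiOf (n : ℕ) (B : Finset (ℕ × ℕ)) : ℕ × ℕ :=
  let m := WithTop.untopD 0 ((B.image (ordA n)).min)
  (n - m % (n + 1), m / (n + 1))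

/-- The places that get the symbol `−` at the current step, when the
current set of unfilled places is `B`. -/
def minusSet (n : ℕ) (B : Finset (ℕ × ℕ)) : Finset (ℕ × ℕ) :=
  B.filter fun p =>
    p.1 = (xiOf n B).1 ∧ (xiOf n B).2 < p.2 ∧ p.2 < (xiOf n B).1 ∧ (p.2, (xiOf n B).2) ∈ B

/-- The places that get the symbol `+` at the current step. -/
def plusSet (n : ℕ) (B : Finset (ℕ × ℕ)) : Finset (ℕ × ℕ) :=
  B.filter fun p =>
    p.2 = (xiOf n B).2 ∧ (xiOf n B).2 < p.1 ∧ p.1 < (xiOf n B).1 ∧ ((xiOf n B).1, p.1) ∈ B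

/-- `Bset n M i` is the set of places unfilled after step `i` of the diagram. -/
def Bset (n : ℕ) (M : Finset (ℕ × ℕ)) : ℕ → Finset (ℕ × ℕ)
  | 0 => placesA n \ M
  | i + 1 =>
      Bset n M i \
        insert (xiOf n (Bset n M i)) (minusSet n (Bset n M i) ∪ plusSet n (Bset n M i))

/-- `ξ_i`, the place that receives `⊗` at step `i ≥ 1`. -/
def xiStep (n : ℕ) (M : Finset (ℕ × ℕ)) (i : ℕ) : ℕ × ℕ := xiOf n (Bset n M (i - 1))

/-- `C_i⁻`, the places filled with `−` at step `i ≥ 1`. -/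
def Cminus (n : ℕ) (M : Finset (ℕ × ℕ)) (i : ℕ) : Finset (ℕ × ℕ) :=
  minusSet n (Bset n M (i - 1))

/-- `C_i⁺`, the places filled with `+` at step `i ≥ 1`. -/
def Cplus (n : ℕ) (M : Finset (ℕ × ℕ)) (i : ℕ) : Finset (ℕ × ℕ) :=
  plusSet n (Bset n M (i - 1))

/-- `M ⊆ A` spans an ideal `𝔪` of `𝔫 = ut(n,K)`. -/
def IsIdealSet (n : ℕ) (M : Finset (ℕ × ℕ)) : Prop :=
  M ⊆ placesA n ∧
    (∀ p ∈ M, ∀ d, 1 ≤ d → d < p.2 → (p.1, d) ∈ M) ∧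
    (∀ p ∈ M, ∀ c, p.1 < c → c ≤ n → (c, p.2) ∈ M)

/-- `s` is the number of steps after which the diagram is complete. -/
def IsNumSteps (n : ℕ) (M : Finset (ℕ × ℕ)) (s : ℕ) : Prop :=
  Bset n M s = ∅ ∧ ∀ j < s, (Bset n M j).Nonempty



/-- `(a,b) ∈ B_i^{(1.1)}` (relative to `ξ_i = (k,t)`):  `(a,b) ∈ B_i`,
`1 < a < k`, `t < b < k`, and both `(a,t)` and `(k,b)` lie in `B_{i−1}`. -/
def memB11 (n : ℕ) (M : Finset (ℕ × ℕ)) (i k t : ℕ) (q : ℕ × ℕ) : Prop :=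
  q ∈ Bset n M i ∧ 1 < q.1 ∧ q.1 < k ∧ t < q.2 ∧ q.2 < k ∧
    (q.1, t) ∈ Bset n M (i - 1) ∧ (k, q.2) ∈ Bset n M (i - 1)

/-- `(a,b) ∈ B_i^{(1.2)}` of type (c) (relative to `ξ_i = (k,t)`):
`(a,b) ∈ B_i`, `1 < a < k`, `t < b < k`, and `(a,t) ∉ B_{i−1}` or
`(k,b) ∉ B_{i−1}`. -/
def memB12c (n : ℕ) (M : Finset (ℕ × ℕ)) (i k t : ℕ) (q : ℕ × ℕ) : Prop :=
  q ∈ Bset n M i ∧ 1 < q.1 ∧ q.1 < k ∧ t < q.2 ∧ q.2 < k ∧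
    ((q.1, t) ∉ Bset n M (i - 1) ∨ (k, q.2) ∉ Bset n M (i - 1))

/-! Filling `(x,z)` never precedes filling both `(x,y)` and `(y,z)`: whenever a step fills the
corner of such a triangle, the rules of the step (together with the ideal property of `M`,
which keeps `ξ` out of `M`) force one of the two legs to be filled at the same step. Now
`(a,t) ≻ ξ_i` for `a > k`, so `(a,t)` is filled before step `i`, and it is not in `M` since
`a < p`; hence `(a,b)` and `(b,t)` cannot both lie in `B_{i-1}`. -/

lemma mem_placesA {n : ℕ} {q : ℕ × ℕ} : q ∈ placesA n ↔ q.1 ≤ n ∧ 1 ≤ q.2 ∧ q.2 < q.1 := by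
  simp only [placesA, Finset.mem_filter, Finset.mem_product, Finset.mem_range]
  omega

lemma ordA_decode {n : ℕ} {q : ℕ × ℕ} (hq : q.1 ≤ n) :
    (n - ordA n q % (n + 1), ordA n q / (n + 1)) = q := by
  have hmod : ordA n q % (n + 1) = n - q.1 := by
    rw [ordA, Nat.mul_comm, Nat.mul_add_mod, Nat.mod_eq_of_lt (by omega)]
  have hdiv : ordA n q / (n + 1) = q.2 := by
    rw [ordA, Nat.mul_comm, Nat.mul_add_div (by omega), Nat.div_eq_of_lt (by omega), Nat.add_zero]
  rw [hmod, hdiv]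
  ext
  · simp only
    omega
  · rfl

lemma xiOf_mem_and_ordA_le {n : ℕ} {B : Finset (ℕ × ℕ)} (hB : B ⊆ placesA n)
    (hne : B.Nonempty) : xiOf n B ∈ B ∧ ∀ r ∈ B, ordA n (xiOf n B) ≤ ordA n r := by
  obtain ⟨m, hm⟩ := Finset.min_of_nonempty (hne.image (ordA n))
  obtain ⟨q, hq, rfl⟩ := Finset.mem_image.1 (Finset.mem_of_min hm)
  have hxi : xiOf n B = q := by
    simp only [xiOf, hm, WithTop.untopD_coe]
    exact ordA_decode (mem_placesA.1 (hB hq)).1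
  exact ⟨hxi ▸ hq, fun r hr => hxi ▸ Finset.min_le_of_eq (Finset.mem_image_of_mem _ hr) hm⟩

lemma Bset_subset_placesA (n : ℕ) (M : Finset (ℕ × ℕ)) : ∀ j, Bset n M j ⊆ placesA n
  | 0 => Finset.sdiff_subset
  | j + 1 => Finset.sdiff_subset.trans (Bset_subset_placesA n M j)

lemma Bset_antitone (n : ℕ) (M : Finset (ℕ × ℕ)) : Antitone (Bset n M) :=
  antitone_nat_of_succ_le fun _ => Finset.sdiff_subset

lemma notMem_of_mem_Bset {n : ℕ} {M : Finset (ℕ × ℕ)} {j : ℕ} {q : ℕ × ℕ}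
    (hq : q ∈ Bset n M j) : q ∉ M :=
  (Finset.mem_sdiff.1 (Bset_antitone n M (Nat.zero_le j) hq)).2

def TriangleClosed (M B : Finset (ℕ × ℕ)) : Prop :=
  ∀ ⦃x y z : ℕ⦄, y < x → z < y → (x, y) ∈ B → (y, z) ∈ B → (x, z) ∉ M → (x, z) ∈ B

section Step

variable {n : ℕ} {M B : Finset (ℕ × ℕ)}

lemma TriangleClosed.step (hT : TriangleClosed M B) (hM : IsIdealSet n M)
    (hB : B ⊆ placesA n) (hBM : ∀ q ∈ B, q ∉ M) :
    TriangleClosed M (B \ insert (xiOf n B) (minusSet n B ∪ plusSet n B)) := by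
  intro x y z hyx hzy hxy hyz hxzM
  simp only [Finset.mem_sdiff, Finset.mem_insert, Finset.mem_union, not_or] at hxy hyz ⊢
  obtain ⟨hxy, -, hxy_minus, -⟩ := hxy
  obtain ⟨hyz, -, -, hyz_plus⟩ := hyz
  have hξB : xiOf n B ∈ B := (xiOf_mem_and_ordA_le hB ⟨_, hxy⟩).1
  rcases hξ : xiOf n B with ⟨u, v⟩
  rw [hξ] at hξB
  simp only [minusSet, plusSet, Finset.mem_filter, hξ] at hxy_minus hyz_plus ⊢
  refine ⟨hT hyx hzy hxy hyz hxzM, ?_, ?_, ?_⟩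
  · rintro ⟨rfl, rfl⟩
    exact hxy_minus ⟨hxy, rfl, hzy, hyx, hyz⟩
  · rintro ⟨-, rfl, hvz, -, hzv⟩
    -- `(y,v) ∈ M` would put `ξ = (x,v)` in `M` by closure down the column
    have hyv : (y, v) ∈ B := hT hzy hvz hyz hzv fun h =>
      hBM _ hξB (hM.2.2 _ h x hyx (mem_placesA.1 (hB hxy)).1)
    exact hxy_minus ⟨hxy, rfl, hvz.trans hzy, hyx, hyv⟩
  · rintro ⟨-, rfl, -, hxu, hux⟩
    -- `(u,y) ∈ M` would put `ξ = (u,z)` in `M` by closure along the row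
    have huy : (u, y) ∈ B := hT hxu hyx hux hxy fun h =>
      hBM _ hξB (hM.2.1 _ h z (mem_placesA.1 (hB hyz)).2.1 hzy)
    exact hyz_plus ⟨hyz, rfl, hzy, hyx.trans hxu, huy⟩

end Step

lemma triangleClosed_Bset {n : ℕ} {M : Finset (ℕ × ℕ)} (hM : IsIdealSet n M) :
    ∀ j, TriangleClosed M (Bset n M j)
  | 0 => fun x y z hyx hzy hxy hyz hxzM => by
    have hxy := mem_placesA.1 (Finset.mem_sdiff.1 hxy).1
    have hyz := mem_placesA.1 (Finset.mem_sdiff.1 hyz).1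
    exact Finset.mem_sdiff.2 ⟨mem_placesA.2 ⟨hxy.1, hyz.2.1, hzy.trans hyx⟩, hxzM⟩
  | j + 1 => (triangleClosed_Bset hM j).step hM (Bset_subset_placesA n M j)
      fun _ => notMem_of_mem_Bset

lemma notMem_Bset_pred_of_xiStep {n : ℕ} {M : Finset (ℕ × ℕ)} {i k t a : ℕ}
    (hkt : xiStep n M i = (k, t)) (hka : k < a) (ha : a ≤ n) :
    (a, t) ∉ Bset n M (i - 1) := by
  intro hat
  have hle := (xiOf_mem_and_ordA_le (Bset_subset_placesA n M (i - 1)) ⟨_, hat⟩).2 _ hat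
  rw [← xiStep, hkt] at hle
  simp only [ordA] at hle
  omega

theorem case5_impossible_general
    (n : ℕ) (M : Finset (ℕ × ℕ))
    (hM : IsIdealSet n M)
    (i k t p : ℕ)
    (hkt : xiStep n M i = (k, t))
    (hMp : ∀ j, (j, t) ∈ M ↔ p ≤ j ∧ j ≤ n) :
    ¬ ∃ a b c : ℕ, a > b ∧ b > c ∧ k < a ∧ a < p ∧
        (a, b) ∈ Bset n M i ∧ t < b ∧ b < k ∧
        memB11 n M i k t (b, c) := by
  rintro ⟨a, b, c, hba, -, hka, hap, hab, htb, -, -, -, -, -, -, hbt, -⟩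
  have hab : (a, b) ∈ Bset n M (i - 1) := Bset_antitone n M (Nat.sub_le i 1) hab
  have ha : a ≤ n := (mem_placesA.1 (Bset_subset_placesA n M _ hab)).1
  have hatM : (a, t) ∉ M := fun h => by have := (hMp a).1 h; omega
  exact notMem_Bset_pred_of_xiStep hkt hka ha (triangleClosed_Bset hM _ hba htb hab hbt hatM)

/-- **Case 5 impossibility.**  Writing `ξ_i = (k,t)`, with `p > k` such that the
elements of `M` in column `t` are exactly `{(j,t) : p ≤ j ≤ n}`, there is no
configuration `a > b > c` with `k < a < p`, `(a,b) ∈ B_i^{(2)}` and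
`(b,c) ∈ B_i^{(1.1)}`. -/
theorem case5_impossible (K : Type*) [Field K] [CharZero K]
    (n s : ℕ) (hn : 2 ≤ n) (M : Finset (ℕ × ℕ))
    (hM : IsIdealSet n M) (hs : IsNumSteps n M s)
    (i k t p : ℕ) (hi1 : 1 ≤ i) (his : i ≤ s)
    (hkt : xiStep n M i = (k, t)) (hkp : k < p)
    (hMp : ∀ j, (j, t) ∈ M ↔ p ≤ j ∧ j ≤ n) :
    ¬ ∃ a b c : ℕ, a > b ∧ b > c ∧ k < a ∧ a < p ∧
        (a, b) ∈ Bset n M i ∧ t < b ∧ b < k ∧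
        memB11 n M i k t (b, c) :=
  case5_impossible_general n M hM i k t p hkt hMp

end Panov
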